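/- arXiv:1511.00452 — 3 statements merged into one kernel-verified Lean document; each statement's English description precedes it below -/
import Mathlib

section
/- For every profile q̄ ∈ P(M)^W of preference lists for the women over the men, the M-optimal stable matching rule C^q̄ is strategy-proof (i.e., strategy-proof for every man m ∈ M). -/
/-- A preference list over `α` (a totally ordered subset of `α`), represented as a
duplicate-free list, most-preferred member first. Members of `α` not on the list
are unranked (unacceptable). -/
abbrev PrefList (α : Type) : Type := {l : List α // l.Nodup}

/-- `x ≻ y` according to `p`: `x` is ranked above `y` on `p`, or `x` appears on `p`
while `y` does not. -/
def prefers {α : Type} (p : PrefList α) (x y : α) : Prop :=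
  [x, y].Sublist p.val ∨ (x ∈ p.val ∧ y ∉ p.val)

/-- Strict preference over possible outcomes, where `none` means being unmatched:
being matched to someone on one's list is better than being unmatched, which is
better than being matched to someone not on one's list. -/
def outPrefers {α : Type} (p : PrefList α) : Option α → Option α → Prop
  | some x, some y => prefers p x y
  | some x, none => x ∈ p.val
  | none, some y => y ∉ p.val
  | none, none => False

/-- A preference list is full if it ranks every member of the opposite side. -/
def IsFull {α : Type} (p : PrefList α) : Prop := ∀ x : α, x ∈ p.val

/-- A matching between `M` and `W`: a one-to-one mapping between a subset of `M`
and a subset of `W`, recorded as a partial injective function from men to women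
(`μ.toFun m = none` meaning that `m` is unmatched). -/
structure Matching (M W : Type) where
  toFun : M → Option W
  inj : ∀ ⦃m m' : M⦄ ⦃w : W⦄, toFun m = some w → toFun m' = some w → m = m'

/-- Woman `w` strictly prefers man `m` (according to her list `q`) over the partner
matched to her by `μ` (or over remaining unmatched, if `μ` leaves her unmatched). -/
def womanPrefersOver {M W : Type} (q : PrefList M) (μ : Matching M W) (w : W) (m : M) : Prop :=
  (∃ m', μ.toFun m' = some w ∧ prefers q m m') ∨
    ((∀ m', μ.toFun m' ≠ some w) ∧ m ∈ q.val)

/-- `μ` is stable with respect to men's profile `pbar` and women's profile `qbar`: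
there is no man and woman each preferring the other over their match under `μ`, and
no participant is matched with a partner not on their preference list. -/
def IsStable {M W : Type} (pbar : M → PrefList W) (qbar : W → PrefList M)
    (μ : Matching M W) : Prop :=
  ¬ ((∃ m w, outPrefers (pbar m) (some w) (μ.toFun m) ∧ womanPrefersOver (qbar w) μ w m) ∨
     (∃ m w, μ.toFun m = some w ∧ (w ∉ (pbar m).val ∨ m ∉ (qbar w).val)))

/-- `C` is `qbar`-stable: `C pbar` is stable with respect to `pbar` and `qbar` for
every men's profile `pbar`. -/
def IsStableRule {M W : Type} (qbar : W → PrefList M)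
    (C : (M → PrefList W) → Matching M W) : Prop :=
  ∀ pbar, IsStable pbar qbar (C pbar)

/-- `C` is the `M`-optimal stable matching rule `C^qbar`: it maps each men's profile
`pbar` to a stable matching that every man weakly prefers to every stable matching. -/
def IsMOptimalStableRule {M W : Type} (qbar : W → PrefList M)
    (C : (M → PrefList W) → Matching M W) : Prop :=
  ∀ pbar, IsStable pbar qbar (C pbar) ∧
    ∀ μ, IsStable pbar qbar μ → ∀ m, ¬ outPrefers (pbar m) (μ.toFun m) ((C pbar).toFun m)

/-- `C` is strategy-proof for man `m`. -/
def StrategyProofFor {M W : Type} [DecidableEq M]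
    (C : (M → PrefList W) → Matching M W) (m : M) : Prop :=
  ∀ (pbar : M → PrefList W) (p' : PrefList W),
    ¬ outPrefers (pbar m) ((C (Function.update pbar m p')).toFun m) ((C pbar).toFun m)

/-- A women's profile `qbar` is cyclical if there are men `a`, `b`, `c` and women
`x`, `y` with `a ≻ₓ b ≻ₓ c ≻_y a`. -/
def Cyclical {M W : Type} (qbar : W → PrefList M) : Prop :=
  ∃ (a b c : M) (x y : W),
    prefers (qbar x) a b ∧ prefers (qbar x) b c ∧ prefers (qbar y) c a

/-- A one-side-querying extensive-form matching mechanism for `M` over `W`: a rooted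
tree each of whose leaves is labeled by a matching and each of whose internal nodes
queries a man; the edges out of an internal node querying `q` are the fibers of the
function `next` (two preference lists for `q` lie on the same outgoing edge iff they
are routed to the same subtree). -/
inductive Mech (M W : Type) : Type
  | leaf (μ : Matching M W)
  | node (q : M) (next : PrefList W → Mech M W)

/-- The matching rule implemented by a mechanism: route the profile from the root to
a leaf and output that leaf's matching. -/
def Mech.run {M W : Type} : Mech M W → (M → PrefList W) → Matching M W
  | .leaf μ, _ => μ
  | .node q next, pbar => (next (pbar q)).run pbar

/-- Auxiliary definition of obvious strategy-proofness for man `m`: `P` is the set of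
profiles passing through the current node. At each node querying `m`, for all profiles
`pbar`, `pbar'` passing through the node at which `m`'s lists diverge (are routed to
distinct subtrees), the outcome of `pbar'` is not strictly preferred (according to
`pbar m`) to the outcome of `pbar`. -/
def Mech.OSPAux {M W : Type} (m : M) : Mech M W → Set (M → PrefList W) → Prop
  | .leaf _, _ => True
  | .node q next, P =>
      (q = m → ∀ pbar ∈ P, ∀ pbar' ∈ P, next (pbar m) ≠ next (pbar' m) →
        ¬ outPrefers (pbar m) (((next (pbar' m)).run pbar').toFun m)
            (((next (pbar m)).run pbar).toFun m)) ∧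
      ∀ p : PrefList W, Mech.OSPAux m (next p) {pbar ∈ P | next (pbar q) = next p}

/-- `I` is obviously strategy-proof (OSP) for man `m`. -/
def Mech.OSPFor {M W : Type} (I : Mech M W) (m : M) : Prop :=
  Mech.OSPAux m I Set.univ

/-- A matching rule is OSP-implementable if it is implemented by some mechanism that
is OSP for every man. -/
def OSPImplementable {M W : Type} (C : (M → PrefList W) → Matching M W) : Prop :=
  ∃ I : Mech M W, (∀ m : M, I.OSPFor m) ∧ ∀ pbar, I.run pbar = C pbar

/-- A two-sides-querying extensive-form matching mechanism: internal nodes may query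
either a man (about his preference list over `W`) or a woman (about her preference
list over `M`). -/
inductive Mech2 (M W : Type) : Type
  | leaf (μ : Matching M W)
  | nodeM (q : M) (next : PrefList W → Mech2 M W)
  | nodeW (q : W) (next : PrefList M → Mech2 M W)

/-- The two-sides-querying matching rule implemented by a two-sides-querying mechanism. -/
def Mech2.run {M W : Type} :
    Mech2 M W → (M → PrefList W) → (W → PrefList M) → Matching M W
  | .leaf μ, _, _ => μ
  | .nodeM q next, pbar, qbar => (next (pbar q)).run pbar qbar
  | .nodeW q next, pbar, qbar => (next (qbar q)).run pbar qbar

/-- Auxiliary definition of obvious strategy-proofness of a two-sides-querying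
mechanism for man `m`; `P` is the set of two-sided profiles passing through the
current node. -/
def Mech2.OSPAux {M W : Type} (m : M) :
    Mech2 M W → Set ((M → PrefList W) × (W → PrefList M)) → Prop
  | .leaf _, _ => True
  | .nodeM q next, P =>
      (q = m → ∀ r ∈ P, ∀ r' ∈ P, next (r.1 m) ≠ next (r'.1 m) →
        ¬ outPrefers (r.1 m) (((next (r'.1 m)).run r'.1 r'.2).toFun m)
            (((next (r.1 m)).run r.1 r.2).toFun m)) ∧
      ∀ p : PrefList W, Mech2.OSPAux m (next p) {r ∈ P | next (r.1 q) = next p}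
  | .nodeW q next, P =>
      ∀ p : PrefList M, Mech2.OSPAux m (next p) {r ∈ P | next (r.2 q) = next p}

/-- A two-sides-querying mechanism `I` is obviously strategy-proof (OSP) for man `m`. -/
def Mech2.OSPForM {M W : Type} (I : Mech2 M W) (m : M) : Prop :=
  Mech2.OSPAux m I Set.univ

/-!
Run men-proposing deferred acceptance, one rejection at a time. Its outcome `σ` is stable, so
by optimality every man weakly prefers `C pbar` to `σ`. If `m` gained by reporting `p'`, the
matching `ν = C (update pbar m p')` would be strictly better than `σ` for `m`. The blocking
lemma of Gale and Sotomayor then yields a pair `(b, w)` blocking `ν` under the true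
preferences in which `b` does not strictly prefer `ν` to `σ`; so `b ≠ m`, and `(b, w)` also
blocks `ν` under the reported profile, contradicting its stability.
-/

theorem List.Nodup.pair_sublist_iff {α : Type*} [DecidableEq α] {l : List α} (hl : l.Nodup)
    {x y : α} :
    [x, y].Sublist l ↔ x ∈ l ∧ y ∈ l ∧ l.idxOf x < l.idxOf y := by
  induction l with
  | nil => simp
  | cons a t ih =>
    obtain ⟨ha, ht⟩ := List.nodup_cons.mp hl
    have not_sublist : ∀ z, ¬[a, z].Sublist t ∧ ¬[z, a].Sublist t := fun z =>
      ⟨fun h => ha (h.subset (by simp)), fun h => ha (h.subset (by simp))⟩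
    by_cases hx : x = a <;> by_cases hy : y = a
    · subst hx hy; simpa using ha
    · subst hx
      simp [List.sublist_cons_iff, hy, List.idxOf_cons_ne _ (Ne.symm hy), (not_sublist y).1]
    · subst hy
      simp [List.sublist_cons_iff, hx, List.idxOf_cons_ne _ (Ne.symm hx), (not_sublist x).2]
    · simp [List.sublist_cons_iff, hx, hy, List.idxOf_cons_ne _ (Ne.symm hx),
        List.idxOf_cons_ne _ (Ne.symm hy), ih ht]

namespace PrefList

open Classical

variable {α : Type} (p : PrefList α)

/-- Position of an outcome on `p`, the top choice having rank `0`. Being unmatched has rank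
`p.val.length`, below every listed partner and above every unlisted one, so that `outPrefers p`
becomes `<` on ranks. -/
noncomputable def rank : Option α → ℕ
  | some x => if x ∈ p.val then p.val.idxOf x else p.val.length + 1
  | none => p.val.length

theorem rank_some_of_mem {x : α} (hx : x ∈ p.val) : p.rank (some x) = p.val.idxOf x :=
  if_pos hx

theorem rank_some_lt_length_iff {x : α} : p.rank (some x) < p.val.length ↔ x ∈ p.val := by
  by_cases hx : x ∈ p.val <;> simp [rank, hx, List.idxOf_lt_length_iff]

theorem outPrefers_iff_rank_lt {o o' : Option α} : outPrefers p o o' ↔ p.rank o < p.rank o' := by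
  rcases o with _ | x <;> rcases o' with _ | y
  · simp [outPrefers, rank]
  · by_cases hy : y ∈ p.val <;> simp [outPrefers, rank, hy, List.idxOf_le_length]
  · exact (p.rank_some_lt_length_iff).symm
  · by_cases hx : x ∈ p.val <;> by_cases hy : y ∈ p.val <;>
      simp [outPrefers, prefers, rank, p.prop.pair_sublist_iff, hx, hy, List.idxOf_le_length,
        Nat.le_succ_of_le]

theorem prefers_iff_rank_lt {x y : α} : prefers p x y ↔ p.rank (some x) < p.rank (some y) :=
  p.outPrefers_iff_rank_lt (o := some x) (o' := some y)

theorem rank_getElem? {k : ℕ} (hk : k ≤ p.val.length) : p.rank p.val[k]? = k := by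
  rcases hk.lt_or_eq with hk | rfl
  · rw [List.getElem?_eq_getElem hk, rank_some_of_mem _ (List.getElem_mem hk),
      List.Nodup.idxOf_getElem p.prop]
  · simp [rank]

theorem eq_some_of_rank_eq {o : Option α} {x : α} (hx : x ∈ p.val)
    (h : p.rank o = p.rank (some x)) : o = some x := by
  rw [rank_some_of_mem p hx] at h
  have hlt := List.idxOf_lt_length_iff.mpr hx
  rcases o with _ | y
  · simp only [rank] at h
    omega
  · by_cases hy : y ∈ p.val
    · rw [rank_some_of_mem p hy, List.idxOf_inj hy] at h
      rw [h]
    · simp only [rank, hy, ↓reduceIte] at h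
      omega

theorem exists_eq_some_of_rank_lt_length {o : Option α} (h : p.rank o < p.val.length) :
    ∃ x, o = some x ∧ x ∈ p.val := by
  rcases o with _ | x
  · exact absurd h (lt_irrefl _)
  · exact ⟨x, rfl, p.rank_some_lt_length_iff.mp h⟩

variable {p}

theorem mem_of_prefers {x y : α} (h : prefers p x y) : x ∈ p.val :=
  h.elim (fun h => h.subset (by simp)) And.left

theorem ne_of_prefers {x y : α} (h : prefers p x y) : x ≠ y := by
  rintro rfl
  exact lt_irrefl _ (p.prefers_iff_rank_lt.mp h)

theorem prefers_trans {x y z : α} (hxy : prefers p x y) (hyz : prefers p y z) : prefers p x z := by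
  rw [prefers_iff_rank_lt] at *
  exact hxy.trans hyz

theorem not_prefers_of_prefers {x y : α} (h : prefers p x y) : ¬ prefers p y x := by
  rw [prefers_iff_rank_lt] at *
  exact h.asymm

theorem prefers_or_prefers {x y : α} (hy : y ∈ p.val) (hxy : x ≠ y) :
    prefers p x y ∨ prefers p y x := by
  rw [prefers_iff_rank_lt, prefers_iff_rank_lt]
  rcases lt_trichotomy (p.rank (some x)) (p.rank (some y)) with h | h | h
  · exact .inl h
  · exact absurd (Option.some_injective _ (p.eq_some_of_rank_eq hy h)) hxy
  · exact .inr h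

end PrefList

def IsBlockingPair {M W : Type} (p : M → PrefList W) (q : W → PrefList M) (μ : Matching M W)
    (a : M) (w : W) : Prop :=
  outPrefers (p a) (some w) (μ.toFun a) ∧ womanPrefersOver (q w) μ w a

theorem isStable_iff {M W : Type} {p : M → PrefList W} {q : W → PrefList M}
    {μ : Matching M W} :
    IsStable p q μ ↔
      (∀ a w, μ.toFun a = some w → w ∈ (p a).val ∧ a ∈ (q w).val) ∧
        ∀ a w, ¬ IsBlockingPair p q μ a w := by
  simp only [IsStable, IsBlockingPair, not_or, not_exists, not_and, not_not]
  tauto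

namespace DeferredAcceptance

open PrefList Classical

variable {M W : Type} (q : W → PrefList M) (p : M → PrefList W)

/-- In state `k`, man `a` has been rejected by the first `k a` women on his list and proposes
to the next one (`none` once his list is exhausted). -/
def proposal (k : M → ℕ) (a : M) : Option W := (p a).val[k a]?

def Rejectable (k : M → ℕ) (a : M) : Prop :=
  ∃ w, proposal p k a = some w ∧
    (a ∉ (q w).val ∨ ∃ b, proposal p k b = some w ∧ prefers (q w) b a)

noncomputable def step (k : M → ℕ) : M → ℕ :=
  if h : ∃ a, Rejectable q p k a then k + Pi.single h.choose 1 else k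

noncomputable def state (t : ℕ) : M → ℕ := (step q p)^[t] 0

/-- `(p a).rank (some w) < k a` says that `w` has rejected `a`. -/
def RejectionsJustified (k : M → ℕ) : Prop :=
  ∀ a w, (p a).rank (some w) < k a → a ∈ (q w).val →
    ∃ b, proposal p k b = some w ∧ prefers (q w) b a

variable {q p}

theorem proposal_add_single_of_ne {k : M → ℕ} {a b : M} (h : b ≠ a) :
    proposal p (k + Pi.single a 1) b = proposal p k b := by
  simp [proposal, Pi.single_eq_of_ne h]

theorem rank_proposal {k : M → ℕ} {a : M} (hk : k a ≤ (p a).val.length) :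
    (p a).rank (proposal p k a) = k a :=
  (p a).rank_getElem? hk

theorem mem_of_proposal_eq {k : M → ℕ} {a : M} {w : W} (h : proposal p k a = some w) :
    w ∈ (p a).val :=
  List.mem_of_getElem? h

theorem lt_length_of_rejectable {k : M → ℕ} {a : M} (h : Rejectable q p k a) :
    k a < (p a).val.length := by
  obtain ⟨w, hw, -⟩ := h
  exact (List.getElem?_eq_some_iff.mp hw).1

theorem step_spec (k : M → ℕ) :
    (step q p k = k ∧ ∀ a, ¬ Rejectable q p k a) ∨
      ∃ a, Rejectable q p k a ∧ step q p k = k + Pi.single a 1 := by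
  unfold step
  by_cases h : ∃ a, Rejectable q p k a
  · exact .inr ⟨h.choose, h.choose_spec, by rw [dif_pos h]⟩
  · exact .inl ⟨by rw [dif_neg h], not_exists.mp h⟩

theorem le_step (k : M → ℕ) : k ≤ step q p k := by
  rcases step_spec (q := q) (p := p) k with ⟨h, -⟩ | ⟨a, -, h⟩ <;> rw [h]
  exact fun b => Nat.le_add_right (k b) _

theorem state_zero : state q p 0 = 0 := rfl

theorem state_succ (t : ℕ) : state q p (t + 1) = step q p (state q p t) :=
  Function.iterate_succ_apply' _ _ _

theorem monotone_state : Monotone (state q p) :=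
  monotone_nat_of_le_succ fun t => by rw [state_succ]; exact le_step _

theorem RejectionsJustified.add_single {k : M → ℕ} (hk : RejectionsJustified q p k)
    (hbound : ∀ a, k a ≤ (p a).val.length) {a₀ : M} (ha₀ : Rejectable q p k a₀) :
    RejectionsJustified q p (k + Pi.single a₀ 1) := by
  obtain ⟨w₀, hw₀, hreason⟩ := ha₀
  have holder : ∀ {b w a}, proposal p k b = some w → prefers (q w) b a →
      ∃ b', proposal p (k + Pi.single a₀ 1) b' = some w ∧ prefers (q w) b' a := by
    intro b w a hb hba
    by_cases hba₀ : b = a₀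
    · subst hba₀
      obtain rfl : w = w₀ := Option.some_injective _ (hb.symm.trans hw₀)
      rcases hreason with hout | ⟨b', hb', hb'b⟩
      · exact absurd (mem_of_prefers hba) hout
      · exact ⟨b', by rwa [proposal_add_single_of_ne (ne_of_prefers hb'b)],
          prefers_trans hb'b hba⟩
    · exact ⟨b, by rwa [proposal_add_single_of_ne hba₀], hba⟩
  intro a w hlt haw
  by_cases hold : (p a).rank (some w) < k a
  · obtain ⟨b, hb, hba⟩ := hk a w hold haw
    exact holder hb hba
  · obtain rfl : a = a₀ := by
      by_contra hne
      simp only [Pi.add_apply, Pi.single_eq_of_ne hne, add_zero] at hlt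
      exact hold hlt
    obtain rfl : w = w₀ := by
      have hrank : (p a).rank (some w) = (p a).rank (some w₀) := by
        rw [← hw₀, rank_proposal (hbound a)]
        simp only [Pi.add_apply, Pi.single_eq_same, Order.lt_add_one_iff] at hlt
        omega
      exact Option.some_injective _ ((p a).eq_some_of_rank_eq (mem_of_proposal_eq hw₀) hrank)
    rcases hreason with hout | ⟨b, hb, hba⟩
    · exact absurd haw hout
    · exact ⟨b, by rwa [proposal_add_single_of_ne (ne_of_prefers hba)], hba⟩

theorem state_le_length (t : ℕ) (a : M) : state q p t a ≤ (p a).val.length := by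
  induction t generalizing a with
  | zero => exact Nat.zero_le _
  | succ t ih =>
    rw [state_succ]
    rcases step_spec (state q p t) with ⟨h, -⟩ | ⟨a₀, ha₀, h⟩ <;> rw [h]
    · exact ih a
    · by_cases ha : a = a₀
      · subst ha
        simpa using lt_length_of_rejectable ha₀
      · simpa [Pi.single_eq_of_ne ha] using ih a

theorem rejectionsJustified_state (t : ℕ) : RejectionsJustified q p (state q p t) := by
  induction t with
  | zero => intro a w h; exact absurd h (Nat.not_lt_zero _)
  | succ t ih =>
    rw [state_succ]
    rcases step_spec (state q p t) with ⟨h, -⟩ | ⟨a₀, ha₀, h⟩ <;> rw [h]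
    · exact ih
    · exact ih.add_single (state_le_length t) ha₀

theorem state_succ_eq_or (t : ℕ) (a : M) :
    state q p (t + 1) a = state q p t a ∨ state q p (t + 1) a = state q p t a + 1 := by
  rw [state_succ]
  rcases step_spec (state q p t) with ⟨h, -⟩ | ⟨a₀, -, h⟩ <;> rw [h]
  · exact .inl rfl
  · by_cases ha : a = a₀
    · subst ha; simp
    · simp [Pi.single_eq_of_ne ha]

theorem eq_of_state_succ_ne {t : ℕ} {a b : M} (ha : state q p (t + 1) a ≠ state q p t a)
    (hb : state q p (t + 1) b ≠ state q p t b) : a = b := by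
  rw [state_succ] at ha hb
  rcases step_spec (state q p t) with ⟨h, -⟩ | ⟨a₀, -, h⟩ <;> rw [h] at ha hb
  · exact absurd rfl ha
  · have unmoved :
        ∀ c, c ≠ a₀ → (state q p t + Pi.single a₀ 1 : M → ℕ) c = state q p t c :=
      fun c hc => by simp [Pi.single_eq_of_ne hc]
    rw [Not.imp_symm (unmoved a) ha, Not.imp_symm (unmoved b) hb]

variable [Fintype M]

variable (p) in
/-- Each step raises `∑ a, k a`, which never exceeds the total length of the men's lists, so
the process has stopped after that many steps. -/
def stepBound : ℕ := ∑ a, (p a).val.length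

variable (q p) in
noncomputable def final : M → ℕ := state q p (stepBound p)

theorem not_rejectable_final (a : M) : ¬ Rejectable q p (final q p) a := by
  have progress :
      ∀ t, (∀ a, ¬ Rejectable q p (state q p t) a) ∨ t ≤ ∑ a, state q p t a := by
    intro t
    induction t with
    | zero => exact .inr (Nat.zero_le _)
    | succ t ih =>
      rw [state_succ]
      rcases step_spec (state q p t) with ⟨h, hstop⟩ | ⟨a₀, ha₀, h⟩ <;> rw [h]
      · exact .inl hstop
      · refine .inr ?_
        rcases ih with hstop | ih
        · exact absurd ha₀ (hstop a₀)
        · simp only [Pi.add_apply, Finset.sum_add_distrib, Finset.sum_pi_single',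
            Finset.mem_univ, ↓reduceIte]
          omega
  intro ha
  rcases progress (stepBound p) with hstop | hle
  · exact hstop a ha
  · have hlt : ∑ b, final q p b < stepBound p :=
      Finset.sum_lt_sum (fun b _ => state_le_length _ b)
        ⟨a, Finset.mem_univ a, lt_length_of_rejectable ha⟩
    exact absurd hle (not_le.mpr hlt)

theorem proposal_final_eq_some {a : M} {w : W} (h : proposal p (final q p) a = some w) :
    a ∈ (q w).val ∧ ∀ b, proposal p (final q p) b = some w → ¬ prefers (q w) b a := by
  constructor
  · by_contra ha
    exact not_rejectable_final a ⟨w, h, .inl ha⟩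
  · intro b hb hba
    exact not_rejectable_final a ⟨w, h, .inr ⟨b, hb, hba⟩⟩

variable (q p) in
noncomputable def matching : Matching M W where
  toFun := proposal p (final q p)
  inj a a' w ha ha' := by
    by_contra hne
    rcases prefers_or_prefers (proposal_final_eq_some ha').1 hne with h | h
    · exact (proposal_final_eq_some ha').2 a ha h
    · exact (proposal_final_eq_some ha).2 a' ha' h

theorem rank_matching (a : M) : (p a).rank ((matching q p).toFun a) = final q p a :=
  rank_proposal (state_le_length _ a)

theorem matching_isStable : IsStable p q (matching q p) := by
  rw [isStable_iff]
  refine ⟨fun a w h => ⟨mem_of_proposal_eq h, (proposal_final_eq_some h).1⟩, ?_⟩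
  rintro a w ⟨haw, hwa⟩
  have hrank : (p a).rank (some w) < final q p a := by
    rwa [outPrefers_iff_rank_lt, rank_matching] at haw
  have hmem : a ∈ (q w).val := hwa.elim (fun ⟨_, _, h⟩ => mem_of_prefers h) And.right
  obtain ⟨b, hb, hba⟩ := rejectionsJustified_state _ a w hrank hmem
  rcases hwa with ⟨a', ha', hab'⟩ | ⟨hfree, -⟩
  · obtain rfl : b = a' := (matching q p).inj hb ha'
    exact not_prefers_of_prefers hba hab'
  · exact hfree b hb

theorem exists_last_rejection_among (I : Finset M) (hI : ∃ m ∈ I, 0 < final q p m) :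
    ∃ t, t + 1 ≤ stepBound p ∧ ∃ m₄ ∈ I,
      state q p t m₄ + 1 = final q p m₄ ∧
        ∀ a ∈ I, a ≠ m₄ → state q p t a = final q p a := by
  have hsettled : ∃ t, ∀ a ∈ I, state q p t a = final q p a := ⟨_, fun _ _ => rfl⟩
  obtain ⟨m, hm, hpos⟩ := hI
  obtain ⟨t, ht⟩ : ∃ t, Nat.find hsettled = t + 1 := by
    refine Nat.exists_eq_succ_of_ne_zero fun h0 => ?_
    have := Nat.find_spec hsettled m hm
    rw [h0, state_zero] at this
    exact hpos.ne this
  have hafter := Nat.find_spec hsettled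
  rw [ht] at hafter
  obtain ⟨m₄, hm₄, hmoved⟩ : ∃ m₄ ∈ I, state q p t m₄ ≠ final q p m₄ := by
    simpa using Nat.find_min hsettled (ht ▸ Nat.lt_succ_self t)
  have hmoved' : state q p (t + 1) m₄ ≠ state q p t m₄ :=
    (hafter m₄ hm₄).trans_ne hmoved.symm
  refine ⟨t, ht ▸ Nat.find_min' hsettled fun _ _ => rfl, m₄, hm₄, ?_, fun a ha hne => ?_⟩
  · rw [← hafter m₄ hm₄]
    exact ((state_succ_eq_or t m₄).resolve_left hmoved').symm
  · rw [← hafter a ha]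
    by_contra h
    exact hne (eq_of_state_succ_ne (Ne.symm h) hmoved')

variable (q p) in
noncomputable def improvers (ν : Matching M W) : Finset M :=
  Finset.univ.filter fun a => outPrefers (p a) (ν.toFun a) ((matching q p).toFun a)

theorem mem_improvers {ν : Matching M W} {a : M} :
    a ∈ improvers q p ν ↔ (p a).rank (ν.toFun a) < final q p a := by
  simp [improvers, outPrefers_iff_rank_lt, rank_matching]

theorem exists_eq_some_of_mem_improvers {ν : Matching M W} {a : M} (ha : a ∈ improvers q p ν) :
    ∃ w, ν.toFun a = some w ∧ (p a).rank (some w) < final q p a := by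
  have hlt := mem_improvers.mp ha
  obtain ⟨w, hw, -⟩ := (p a).exists_eq_some_of_rank_lt_length
    (hlt.trans_le (state_le_length _ a))
  exact ⟨w, hw, hw ▸ hlt⟩

theorem isBlockingPair_of_proposal {ν : Matching M W} {t : ℕ} (ht : t ≤ stepBound p)
    {b m' : M} {w : W} (hb : proposal p (state q p t) b = some w) (hνm' : ν.toFun m' = some w)
    (hbm' : prefers (q w) b m') (hbν : b ∉ improvers q p ν) :
    IsBlockingPair p q ν b w := by
  refine ⟨?_, .inl ⟨m', hνm', hbm'⟩⟩
  have hνb : (p b).rank (ν.toFun b) ≠ (p b).rank (some w) := fun h =>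
    ne_of_prefers hbm' (ν.inj ((p b).eq_some_of_rank_eq (mem_of_proposal_eq hb) h) hνm')
  have hw : (p b).rank (some w) = state q p t b := by
    rw [← hb, rank_proposal (state_le_length t b)]
  have hmono : state q p t b ≤ final q p b := monotone_state ht b
  rw [mem_improvers] at hbν
  rw [outPrefers_iff_rank_lt]
  omega

theorem exists_blocking_pair_of_not_mem_image {ν : Matching M W}
    (hν : ∀ a w, ν.toFun a = some w → a ∈ (q w).val) {m' : M}
    (hm' : m' ∈ improvers q p ν)
    (hnot : ∀ a ∈ improvers q p ν, (matching q p).toFun a ≠ ν.toFun m') :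
    ∃ b ∉ improvers q p ν, ∃ w, IsBlockingPair p q ν b w := by
  obtain ⟨w, hνm', hrank⟩ := exists_eq_some_of_mem_improvers hm'
  obtain ⟨b, hb, hbm'⟩ := rejectionsJustified_state _ m' w hrank (hν m' w hνm')
  have hbI : b ∉ improvers q p ν := fun hbI => hnot b hbI (hb.trans hνm'.symm)
  exact ⟨b, hbI, w, isBlockingPair_of_proposal le_rfl hb hνm' hbm' hbI⟩

/-- The improver `m₄` whose rejection comes last ends up with `w₄ = ν m'` for an improver
`m' ≠ m₄`. Just before that rejection `w₄` has already rejected `m'`, so she holds a proposal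
from some `b` she prefers to `m'`; `b` is rejected afterwards, hence is no improver, and
`(b, w₄)` blocks `ν`. -/
theorem exists_blocking_pair_of_image_eq {ν : Matching M W}
    (hν : ∀ a w, ν.toFun a = some w → a ∈ (q w).val) (hI : (improvers q p ν).Nonempty)
    (himage : (improvers q p ν).image ν.toFun = (improvers q p ν).image (matching q p).toFun) :
    ∃ b ∉ improvers q p ν, ∃ w, IsBlockingPair p q ν b w := by
  set I := improvers q p ν
  have hmoves : ∃ m ∈ I, 0 < final q p m := by
    obtain ⟨m, hm⟩ := hI
    exact ⟨m, hm, (Nat.zero_le _).trans_lt (mem_improvers.mp hm)⟩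
  obtain ⟨t, ht, m₄, hm₄, hlast, hsettled⟩ := exists_last_rejection_among I hmoves
  obtain ⟨m', hm', hνm'⟩ : ∃ m' ∈ I, ν.toFun m' = (matching q p).toFun m₄ := by
    simpa [← himage] using Finset.mem_image_of_mem (matching q p).toFun hm₄
  obtain ⟨w₄, hνw₄, hrank⟩ := exists_eq_some_of_mem_improvers hm'
  have hm'm₄ : m' ≠ m₄ := by
    rintro rfl
    have := mem_improvers.mp hm'
    rw [hνm', rank_matching] at this
    exact lt_irrefl _ this
  rw [← hsettled m' hm' hm'm₄] at hrank
  obtain ⟨b, hb, hbm'⟩ := rejectionsJustified_state t m' w₄ hrank (hν m' w₄ hνw₄)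
  have hσm₄ : (matching q p).toFun m₄ = some w₄ := hνm'.symm.trans hνw₄
  have hbm₄ : b ≠ m₄ := by
    rintro rfl
    have h1 := rank_matching (q := q) (p := p) b
    rw [hσm₄, ← hb, rank_proposal (state_le_length t b)] at h1
    omega
  have hbI : b ∉ I := by
    intro hbI
    refine hbm₄ ((matching q p).inj ?_ hσm₄)
    change (p b).val[final q p b]? = some w₄
    rw [← hsettled b hbI hbm₄]
    exact hb
  exact ⟨b, hbI, w₄, isBlockingPair_of_proposal (by omega) hb hνw₄ hbm' hbI⟩

theorem exists_blocking_pair {ν : Matching M W}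
    (hν : ∀ a w, ν.toFun a = some w → a ∈ (q w).val) {m : M} (hm : m ∈ improvers q p ν) :
    ∃ b ∉ improvers q p ν, ∃ w, IsBlockingPair p q ν b w := by
  set I := improvers q p ν
  by_cases hcase : ∃ m' ∈ I, ∀ a ∈ I, (matching q p).toFun a ≠ ν.toFun m'
  · obtain ⟨m', hm', hnot⟩ := hcase
    exact exists_blocking_pair_of_not_mem_image hν hm' hnot
  push Not at hcase
  have hinj : Set.InjOn ν.toFun I := fun a ha a' _ h => by
    obtain ⟨w, hw, -⟩ := exists_eq_some_of_mem_improvers ha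
    exact ν.inj hw (h ▸ hw)
  refine exists_blocking_pair_of_image_eq hν ⟨m, hm⟩ (Finset.eq_of_subset_of_card_le ?_ ?_)
  · intro w hw
    obtain ⟨m', hm', rfl⟩ := Finset.mem_image.mp hw
    obtain ⟨a, ha, hσa⟩ := hcase m' hm'
    exact Finset.mem_image.mpr ⟨a, ha, hσa⟩
  · rw [Finset.card_image_of_injOn hinj]
    exact Finset.card_image_le

end DeferredAcceptance

open PrefList DeferredAcceptance in
theorem mOptimalStableRule_strategyProof_general
    {M W : Type} [Fintype M] [DecidableEq M]
    (qbar : W → PrefList M) (C : (M → PrefList W) → Matching M W)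
    (hC : IsMOptimalStableRule qbar C) :
    ∀ m : M, StrategyProofFor C m := by
  intro m pbar p' hbetter
  obtain ⟨hIR, hstable⟩ := isStable_iff.mp (hC (Function.update pbar m p')).1
  have hm : m ∈ improvers qbar pbar (C (Function.update pbar m p')) := by
    have hopt := (hC pbar).2 _ matching_isStable m
    rw [outPrefers_iff_rank_lt] at hbetter hopt
    rw [mem_improvers, ← rank_matching]
    omega
  obtain ⟨b, hb, w, hbw, hwb⟩ := exists_blocking_pair (fun a w h => (hIR a w h).2) hm
  have hbm : b ≠ m := fun h => hb (h ▸ hm)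
  exact hstable b w ⟨by rwa [Function.update_of_ne hbm], hwb⟩

/-- For every profile `qbar` of preference lists for the women over the
men, the M-optimal stable matching rule `C^qbar` is strategy-proof for every man. -/
theorem mOptimalStableRule_strategyProof
    {M W : Type} [Fintype M] [Fintype W] [DecidableEq M]
    (qbar : W → PrefList M) (C : (M → PrefList W) → Matching M W)
    (hC : IsMOptimalStableRule qbar C) :
    ∀ m : M, StrategyProofFor C m :=
  mOptimalStableRule_strategyProof_general qbar C hC
end

section
/- For every profile q̄ ∈ P(M)^W of preference lists for the women over the men, no q̄-stable one-side-querying matching rule other than the M-optimal stable matching rule C^q̄ is strategy-proof; that is, if C is q̄-stable and strategy-proof, then C = C^q̄. -/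
/-!
If `C` is stable and strategy-proof but `C pbar` gives some man `m` a worse partner than
the man-optimal stable partner `w`, let `m` report the single-entry list `[w]`. The man-optimal
matching stays stable for the new profile, so by the lone-wolf property (a man matched in one
stable matching is matched in every stable matching) `C` must now match `m`, and `[w]` forces
that match to be `w`: a profitable manipulation.
-/

theorem List.pair_sublist_or_pair_sublist {α : Type*} {l : List α} {x y : α}
    (hx : x ∈ l) (hy : y ∈ l) (hne : x ≠ y) : [x, y].Sublist l ∨ [y, x].Sublist l := by
  induction l with
  | nil => simp at hx
  | cons a l ih =>
    simp only [List.mem_cons] at hx hy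
    rcases hx with rfl | hx <;> rcases hy with rfl | hy
    · exact absurd rfl hne
    · exact .inl ((List.singleton_sublist.mpr hy).cons_cons _)
    · exact .inr ((List.singleton_sublist.mpr hx).cons_cons _)
    · exact (ih hx hy).imp (·.cons _) (·.cons _)

def PrefList.single {α : Type} (x : α) : PrefList α := ⟨[x], List.nodup_singleton x⟩

@[ext]
theorem Matching.ext {M W : Type} {μ ν : Matching M W} (h : μ.toFun = ν.toFun) : μ = ν := by
  cases μ; cases ν; simpa using h

section Preferences

variable {α : Type} {p : PrefList α}

theorem prefers_irrefl (x : α) : ¬ prefers p x x := by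
  rintro (h | ⟨hx, hx'⟩)
  · simpa using h.nodup p.2
  · exact hx' hx

theorem prefers_or_prefers_of_ne {x y : α} (hx : x ∈ p.val) (hy : y ∈ p.val) (hne : x ≠ y) :
    prefers p x y ∨ prefers p y x :=
  (List.pair_sublist_or_pair_sublist hx hy hne).imp .inl .inl

theorem outPrefers_of_not_outPrefers {a b : Option α} (ha : ∀ x ∈ a, x ∈ p.val)
    (hb : ∀ y ∈ b, y ∈ p.val) (hne : a ≠ b) (h : ¬ outPrefers p a b) : outPrefers p b a := by
  cases a with
  | none => cases b with
    | none => exact absurd rfl hne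
    | some y => exact not_not.mp h
  | some x => cases b with
    | none => exact h
    | some y =>
      have hxy : x ≠ y := fun hxy => hne (hxy ▸ rfl)
      exact (prefers_or_prefers_of_ne (ha x rfl) (hb y rfl) hxy).resolve_left h

theorem not_outPrefers_single_some (x : α) (o : Option α) :
    ¬ outPrefers (PrefList.single x) o (some x) := by
  cases o <;> simp [outPrefers, prefers, PrefList.single, List.sublist_singleton]

end Preferences

namespace IsStable

variable {M W : Type} {pbar : M → PrefList W} {qbar : W → PrefList M} {μ ν : Matching M W}
  {m : M} {w : W}

theorem mem_of_toFun_eq (hμ : IsStable pbar qbar μ) (h : μ.toFun m = some w) :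
    w ∈ (pbar m).val ∧ m ∈ (qbar w).val := by
  by_contra hc
  exact hμ (.inr ⟨m, w, h, by tauto⟩)

theorem not_womanPrefersOver (hμ : IsStable pbar qbar μ)
    (h : outPrefers (pbar m) (some w) (μ.toFun m)) : ¬ womanPrefersOver (qbar w) μ w m :=
  fun hw => hμ (.inl ⟨m, w, h, hw⟩)

theorem exists_partner_prefers (hμ : IsStable pbar qbar μ)
    (h : outPrefers (pbar m) (some w) (μ.toFun m)) (hm : m ∈ (qbar w).val) :
    ∃ m', μ.toFun m' = some w ∧ prefers (qbar w) m' m := by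
  have hnot := hμ.not_womanPrefersOver h
  simp only [womanPrefersOver, not_or, not_exists, not_and] at hnot
  obtain ⟨hworse, hunmatched⟩ := hnot
  obtain ⟨m', hm'⟩ : ∃ m', μ.toFun m' = some w := by
    by_contra! hc
    exact hunmatched hc hm
  have hne : m' ≠ m := by
    rintro rfl
    rw [hm'] at h
    exact prefers_irrefl w h
  exact ⟨m', hm', ((prefers_or_prefers_of_ne (hμ.mem_of_toFun_eq hm').2 hm hne).resolve_right
    (hworse m' hm'))⟩

theorem exists_improving_of_improving (hμ : IsStable pbar qbar μ) (hν : IsStable pbar qbar ν)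
    (hνm : ν.toFun m = some w) (h : outPrefers (pbar m) (some w) (μ.toFun m)) :
    ∃ m', μ.toFun m' = some w ∧
      ∃ w', ν.toFun m' = some w' ∧ outPrefers (pbar m') (some w') (μ.toFun m') := by
  obtain ⟨m', hμm', hm'm⟩ := hμ.exists_partner_prefers h (hν.mem_of_toFun_eq hνm).2
  have hne : m' ≠ m := by
    rintro rfl
    exact prefers_irrefl m' hm'm
  have hnot : ¬ outPrefers (pbar m') (some w) (ν.toFun m') :=
    fun h' => hν.not_womanPrefersOver h' (.inl ⟨m, hνm, hm'm⟩)
  have hw : w ∈ (pbar m').val := (hμ.mem_of_toFun_eq hμm').1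
  cases hνm' : ν.toFun m' with
  | none => exact absurd (hνm' ▸ hw) hnot
  | some w' =>
    refine ⟨m', hμm', w', hνm', hμm' ▸ ?_⟩
    refine outPrefers_of_not_outPrefers (by simpa using hw) ?_ ?_ (hνm' ▸ hnot)
    · simpa using (hν.mem_of_toFun_eq hνm').1
    · rintro ⟨⟩
      exact hne (ν.inj hνm' hνm)

/-- Lone-wolf property. `exists_improving_of_improving` gives an injective self-map of the finite
set of men who prefer `ν` to `μ`, and `m` would lie outside its range. -/
theorem toFun_ne_none_of_isStable [Finite M] (hμ : IsStable pbar qbar μ)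
    (hν : IsStable pbar qbar ν) (h : ν.toFun m ≠ none) : μ.toFun m ≠ none := by
  intro hμm
  obtain ⟨w, hw⟩ := Option.ne_none_iff_exists'.mp h
  let S := {m' : M // ∃ w', ν.toFun m' = some w' ∧ outPrefers (pbar m') (some w') (μ.toFun m')}
  have hstep (s : S) : ∃ t : S, μ.toFun t.val = ν.toFun s.val := by
    obtain ⟨w', hw', hpref⟩ := s.2
    obtain ⟨m', hm', ht⟩ := hμ.exists_improving_of_improving hν hw' hpref
    exact ⟨⟨m', ht⟩, hm'.trans hw'.symm⟩
  choose next hnext using hstep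
  have hinj : Function.Injective next := by
    intro s t hst
    obtain ⟨w', hw', -⟩ := s.2
    have ht : ν.toFun t.val = some w' := by rw [← hnext t, ← hst, hnext s, hw']
    exact Subtype.ext (ν.inj hw' ht)
  have hmS : ∃ w', ν.toFun m = some w' ∧ outPrefers (pbar m) (some w') (μ.toFun m) :=
    ⟨w, hw, by simpa [hμm, outPrefers] using (hν.mem_of_toFun_eq hw).1⟩
  obtain ⟨s, hs⟩ := Finite.injective_iff_surjective.mp hinj ⟨m, hmS⟩
  obtain ⟨w', hw', -⟩ := s.2
  have := hnext s
  rw [hs, hμm, hw'] at this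
  cases this

theorem update_single [DecidableEq M] (hμ : IsStable pbar qbar μ) (hm : μ.toFun m = some w) :
    IsStable (Function.update pbar m (PrefList.single w)) qbar μ := by
  rintro (⟨m', w', hpref, hwoman⟩ | ⟨m', w', hm', hbad⟩)
  · by_cases hm' : m' = m
    · subst hm'
      rw [Function.update_self, hm] at hpref
      exact not_outPrefers_single_some w _ hpref
    · rw [Function.update_of_ne hm'] at hpref
      exact hμ (.inl ⟨m', w', hpref, hwoman⟩)
  · by_cases hmm' : m' = m
    · subst hmm'
      obtain rfl : w' = w := Option.some_injective _ (hm'.symm.trans hm)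
      rw [Function.update_self] at hbad
      exact hbad.elim (· (List.mem_singleton_self w')) (· (hμ.mem_of_toFun_eq hm).2)
    · rw [Function.update_of_ne hmm'] at hbad
      exact hμ (.inr ⟨m', w', hm', hbad⟩)

end IsStable

theorem stable_strategyProof_eq_mOptimal_general
    {M W : Type} [Fintype M] [DecidableEq M]
    (qbar : W → PrefList M) (C Copt : (M → PrefList W) → Matching M W)
    (hstable : IsStableRule qbar C)
    (hsp : ∀ m : M, StrategyProofFor C m)
    (hopt : IsMOptimalStableRule qbar Copt) :
    C = Copt := by
  funext pbar
  ext1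
  funext m
  by_contra hne
  have hC := hstable pbar
  obtain ⟨hO, hOpt⟩ := hopt pbar
  obtain ⟨w, hw⟩ : ∃ w, (Copt pbar).toFun m = some w := by
    refine Option.ne_none_iff_exists'.mp fun hnone => hne ?_
    rw [hnone]
    by_contra hCm
    exact hO.toFun_ne_none_of_isStable hC hCm hnone
  have hgain : outPrefers (pbar m) (some w) ((C pbar).toFun m) :=
    hw ▸ outPrefers_of_not_outPrefers (fun x hx => (hC.mem_of_toFun_eq hx).1)
      (fun x hx => (hO.mem_of_toFun_eq hx).1) hne (hOpt _ hC m)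
  set pbar' := Function.update pbar m (PrefList.single w)
  have hC' := hstable pbar'
  obtain ⟨w', hw'⟩ := Option.ne_none_iff_exists'.mp
    (hC'.toFun_ne_none_of_isStable (m := m) (hO.update_single hw) (by simp [hw]))
  have hw'w : w' = w := by simpa [pbar', PrefList.single] using (hC'.mem_of_toFun_eq hw').1
  have hdev := hsp m pbar (PrefList.single w)
  rw [← hw'w, ← hw'] at hgain
  exact hdev hgain

/-- For every women's profile `qbar`, no `qbar`-stable matching rule
other than the M-optimal stable matching rule `C^qbar` is strategy-proof: if `C` is
`qbar`-stable and strategy-proof then `C = C^qbar`. -/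
theorem stable_strategyProof_eq_mOptimal
    {M W : Type} [Fintype M] [Fintype W] [DecidableEq M]
    (qbar : W → PrefList M) (C Copt : (M → PrefList W) → Matching M W)
    (hstable : IsStableRule qbar C)
    (hsp : ∀ m : M, StrategyProofFor C m)
    (hopt : IsMOptimalStableRule qbar Copt) :
    C = Copt :=
  stable_strategyProof_eq_mOptimal_general qbar C Copt hstable hsp hopt
end

section
/- Let M = {a, b, c} and W = {x, y, z}, and let q̄ ∈ P(M)^W be the profile of full preference lists given by: a ≻_x b ≻_x c, b ≻_y c ≻_y a, and c ≻_z a ≻_z b. Then no q̄-stable one-side-querying matching rule is OSP-implementable. -/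
/-- The women's profile of the main impossibility lemma: with men `a,b,c = 0,1,2` and
women `x,y,z = 0,1,2`, woman `x` has `a ≻ b ≻ c`, woman `y` has `b ≻ c ≻ a`, and
woman `z` has `c ≻ a ≻ b`. -/
def qbarTricyclical : Fin 3 → PrefList (Fin 3)
  | 0 => ⟨[0, 1, 2], by decide⟩
  | 1 => ⟨[1, 2, 0], by decide⟩
  | 2 => ⟨[2, 0, 1], by decide⟩

namespace TriAux

/-- The three preference lists used in the gadget. -/
def pyx : PrefList (Fin 3) := ⟨[1, 0], by decide⟩
def pzy : PrefList (Fin 3) := ⟨[2, 1], by decide⟩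
def pxz : PrefList (Fin 3) := ⟨[0, 2], by decide⟩

/-- The two candidate lists of each man. -/
def tQ : Fin 3 → Fin 2 → PrefList (Fin 3) := ![![pyx, pzy], ![pzy, pxz], ![pxz, pyx]]

/-- The gadget profiles, indexed by a choice of type for each man. -/
def prof (v : Fin 3 → Fin 2) : Fin 3 → PrefList (Fin 3) := fun m => tQ m (v m)

/-- Witness type-vectors for the divergence argument. -/
def vW : Fin 3 → Fin 3 → Fin 2 := ![![0, 0, 1], ![1, 0, 0], ![0, 1, 0]]
def vW' : Fin 3 → Fin 3 → Fin 2 := ![![1, 1, 0], ![0, 1, 1], ![1, 0, 1]]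

/-- Injectivity of a partial matching function. -/
def Inj3 (f : Fin 3 → Option (Fin 3)) : Prop :=
  ∀ ⦃m m' w : Fin 3⦄, f m = some w → f m' = some w → m = m'

/-- Stability, expressed on the underlying function. -/
def StableF (pbar : Fin 3 → PrefList (Fin 3)) (f : Fin 3 → Option (Fin 3)) : Prop :=
  ¬ ((∃ m w, outPrefers (pbar m) (some w) (f m) ∧
        ((∃ m', f m' = some w ∧ prefers (qbarTricyclical w) m m') ∨
          ((∀ m', f m' ≠ some w) ∧ m ∈ (qbarTricyclical w).val))) ∨
     (∃ m w, f m = some w ∧ (w ∉ (pbar m).val ∨ m ∉ (qbarTricyclical w).val)))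

lemma stable_iff (pbar : Fin 3 → PrefList (Fin 3)) (μ : Matching (Fin 3) (Fin 3)) :
    IsStable pbar qbarTricyclical μ ↔ StableF pbar μ.toFun := Iff.rfl

instance (p : PrefList (Fin 3)) (x y : Fin 3) : Decidable (prefers p x y) := by
  unfold prefers; infer_instance

instance (p : PrefList (Fin 3)) : (o₁ o₂ : Option (Fin 3)) → Decidable (outPrefers p o₁ o₂)
  | some x, some y => inferInstanceAs (Decidable (prefers p x y))
  | some x, none => inferInstanceAs (Decidable (x ∈ p.val))
  | none, some y => inferInstanceAs (Decidable (y ∉ p.val))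
  | none, none => inferInstanceAs (Decidable False)

instance (pbar f) : Decidable (StableF pbar f) := by unfold StableF; infer_instance
instance (f) : Decidable (Inj3 f) := by unfold Inj3; infer_instance

set_option maxRecDepth 10000 in
/-- No single matching is stable for all eight gadget profiles. -/
lemma fact0 : ∀ f : Fin 3 → Option (Fin 3), Inj3 f →
    ¬ ∀ v : Fin 3 → Fin 2, StableF (prof v) f := by decide

set_option maxRecDepth 10000 in
/-- The key preference fact at a divergence node for man `q`. -/
lemma factQ : ∀ q : Fin 3, ∀ f f' : Fin 3 → Option (Fin 3), Inj3 f → Inj3 f' →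
    StableF (prof (vW q)) f → StableF (prof (vW' q)) f' →
    outPrefers (tQ q 0) (f' q) (f q) := by decide

lemma main (C : (Fin 3 → PrefList (Fin 3)) → Matching (Fin 3) (Fin 3))
    (hC : IsStableRule qbarTricyclical C) :
    ∀ (I : Mech (Fin 3) (Fin 3)) (P : Set (Fin 3 → PrefList (Fin 3))),
      (∀ m, Mech.OSPAux m I P) →
      (∀ v : Fin 3 → Fin 2, prof v ∈ P ∧ I.run (prof v) = C (prof v)) → False := by
  intro I
  induction I with
  | leaf μ =>
    intro P _ H
    refine fact0 μ.toFun μ.inj (fun v => ?_)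
    have h := (stable_iff (prof v) (C (prof v))).mp (hC (prof v))
    rwa [← (H v).2] at h
  | node q next ih =>
    intro P hOSP H
    by_cases hsame : next (tQ q 0) = next (tQ q 1)
    · refine ih (tQ q 0) {pbar ∈ P | next (pbar q) = next (tQ q 0)}
        (fun m => (hOSP m).2 (tQ q 0)) (fun v => ?_)
      have hv : next (prof v q) = next (tQ q 0) := by
        obtain ⟨i, hi⟩ : ∃ i, v q = i := ⟨_, rfl⟩
        have h1 : prof v q = tQ q i := by rw [prof, ← hi]
        rw [h1]
        fin_cases i
        · rfl
        · exact hsame.symm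
      refine ⟨⟨(H v).1, hv⟩, ?_⟩
      rw [← hv]
      exact (H v).2
    · have e1 : prof (vW q) q = tQ q 0 := by fin_cases q <;> rfl
      have e2 : prof (vW' q) q = tQ q 1 := by fin_cases q <;> rfl
      have hne : next (prof (vW q) q) ≠ next (prof (vW' q) q) := by
        rw [e1, e2]; exact hsame
      refine (hOSP q).1 rfl (prof (vW q)) (H (vW q)).1 (prof (vW' q)) (H (vW' q)).1 hne ?_
      have hr1 : (next (prof (vW q) q)).run (prof (vW q)) = C (prof (vW q)) := (H (vW q)).2
      have hr2 : (next (prof (vW' q) q)).run (prof (vW' q)) = C (prof (vW' q)) := (H (vW' q)).2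
      rw [hr1, hr2, e1]
      exact factQ q _ _ (C (prof (vW q))).inj (C (prof (vW' q))).inj
        ((stable_iff _ _).mp (hC _)) ((stable_iff _ _).mp (hC _))

end TriAux

/-- For the tricyclical women's profile over three men and three women,
no stable matching rule is OSP-implementable. -/
theorem no_stable_rule_OSPImplementable_tricyclical :
    ∀ C : (Fin 3 → PrefList (Fin 3)) → Matching (Fin 3) (Fin 3),
      IsStableRule qbarTricyclical C → ¬ OSPImplementable C := by
  intro C hC ⟨I, hOSP, hrun⟩
  exact TriAux.main C hC I Set.univ hOSP (fun v => ⟨trivial, hrun _⟩)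
end
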